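/- Let I be a finite index set, and let n > 0, k > 0 and, for all i, j ∈ I, N_i > 0 and N_{ij} > 0 be real numbers. Define ℓ(M) = −Σ_{i,j∈I} [ N_{ij}·log σ(M_{ij}) + (k/n)·N_i·N_j·log σ(−M_{ij}) ] for a real matrix M = (M_{ij})_{i,j∈I}. Then ℓ attains a global minimum over all real matrices M at the unique minimizer M_{ij} = R̃_{ij} := log( n·N_{ij} / (k·N_i·N_j) ); i.e., ℓ(M) ≥ ℓ(R̃) for all M, with equality if and only if M = R̃. -/

import Mathlib

/-!
The objective splits into independent summands `a log σ(x) + b log σ(-x)`, one per entry,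
with `a = N_ij` and `b = (k/n) N_i N_j`. Since `σ(-x) = 1 - σ(x)`, Gibbs' inequality shows
that such a summand is uniquely maximised where `σ(x) = a / (a + b)`, that is at
`x = log (a / b) = R̃_ij`; a sum of uniquely maximised summands is uniquely maximised.
-/

open Finset

noncomputable def sigmoid (x : ℝ) : ℝ := 1 / (1 + Real.exp (-x))

lemma sigmoid_eq_real_sigmoid (x : ℝ) : sigmoid x = Real.sigmoid x := by
  rw [sigmoid, Real.sigmoid_def, one_div]

lemma Real.sigmoid_log_div {a b : ℝ} (ha : 0 < a) (hb : 0 < b) :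
    Real.sigmoid (Real.log (a / b)) = a / (a + b) := by
  rw [Real.sigmoid_def, Real.exp_neg, Real.exp_log (by positivity)]
  field_simp

/-- Gibbs' inequality for the two-point distributions `(t, 1 - t)` and `(a, b) / (a + b)`. -/
lemma mul_log_add_mul_log_one_sub_lt {a b t : ℝ} (ha : 0 < a) (hb : 0 < b) (ht₀ : 0 < t)
    (ht₁ : t < 1) (ht : t ≠ a / (a + b)) :
    a * Real.log t + b * Real.log (1 - t) <
      a * Real.log (a / (a + b)) + b * Real.log (b / (a + b)) := by
  have hab : 0 < a + b := by positivity
  have hs : 0 < 1 - t := sub_pos.2 ht₁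
  have h₁ : Real.log (t * (a + b) / a) < t * (a + b) / a - 1 :=
    Real.log_lt_sub_one_of_pos (by positivity) fun h ↦ ht (by field_simp at h ⊢; linarith)
  have h₂ : Real.log ((1 - t) * (a + b) / b) ≤ (1 - t) * (a + b) / b - 1 :=
    Real.log_le_sub_one_of_pos (by positivity)
  rw [Real.log_div (by positivity) ha.ne', Real.log_mul ht₀.ne' hab.ne'] at h₁
  rw [Real.log_div (by positivity) hb.ne', Real.log_mul hs.ne' hab.ne'] at h₂
  rw [Real.log_div ha.ne' hab.ne', Real.log_div hb.ne' hab.ne']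
  have e₁ : a * (t * (a + b) / a - 1) = t * (a + b) - a := by field_simp
  have e₂ : b * ((1 - t) * (a + b) / b - 1) = (1 - t) * (a + b) - b := by field_simp
  linarith [mul_lt_mul_of_pos_left h₁ ha, mul_le_mul_of_nonneg_left h₂ hb.le]

noncomputable def sgnsTerm (a b x : ℝ) : ℝ :=
  a * Real.log (sigmoid x) + b * Real.log (sigmoid (-x))

lemma sgnsTerm_lt_of_ne {a b x : ℝ} (ha : 0 < a) (hb : 0 < b) (hx : x ≠ Real.log (a / b)) :
    sgnsTerm a b x < sgnsTerm a b (Real.log (a / b)) := by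
  have hp := Real.sigmoid_log_div ha hb
  have hq : 1 - a / (a + b) = b / (a + b) := by field_simp; ring
  simp only [sgnsTerm, sigmoid_eq_real_sigmoid, Real.sigmoid_neg, hp, hq]
  exact mul_log_add_mul_log_one_sub_lt ha hb (Real.sigmoid_pos x) (Real.sigmoid_lt_one x)
    (hp ▸ Real.sigmoid_injective.ne hx)

lemma sum_lt_sum_of_ne_of_strictMax {ι α : Type*} [Fintype ι] {f : ι → α → ℝ} {r : ι → α}
    (hr : ∀ i x, x ≠ r i → f i x < f i (r i)) {x : ι → α} (hx : x ≠ r) :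
    ∑ i, f i (x i) < ∑ i, f i (r i) := by
  obtain ⟨i, hi⟩ := Function.ne_iff.1 hx
  refine sum_lt_sum (fun j _ ↦ ?_) ⟨i, mem_univ i, hr i _ hi⟩
  rcases eq_or_ne (x j) (r j) with h | h
  · rw [h]
  · exact (hr j _ h).le

/-- The unconstrained SGNS objective attains its global minimum exactly at the
shifted product relatedness (pointwise mutual information) matrix `R̃`, and
this minimizer is unique. -/
theorem sgns_global_minimizer
    {I : Type*} [Fintype I]
    (n k : ℝ) (hn : 0 < n) (hk : 0 < k)
    (N : I → ℝ) (Nij : I → I → ℝ)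
    (hN : ∀ i, 0 < N i) (hNij : ∀ i j, 0 < Nij i j)
    (ℓ : (I → I → ℝ) → ℝ)
    (hℓ : ∀ M : I → I → ℝ, ℓ M =
      -∑ i, ∑ j, (Nij i j * Real.log (sigmoid (M i j))
        + (k / n) * N i * N j * Real.log (sigmoid (-(M i j)))))
    (R : I → I → ℝ)
    (hR : ∀ i j, R i j = Real.log (n * Nij i j / (k * N i * N j))) :
    (∀ M : I → I → ℝ, ℓ R ≤ ℓ M) ∧
      (∀ M : I → I → ℝ, ℓ M = ℓ R ↔ M = R) := by
  set b : I → I → ℝ := fun i j ↦ k / n * N i * N j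
  have hb i j : 0 < b i j := by have := hN i; have := hN j; positivity
  have hℓ' M : ℓ M = -∑ i, ∑ j, sgnsTerm (Nij i j) (b i j) (M i j) := hℓ M
  have hR' i j : R i j = Real.log (Nij i j / b i j) := by
    have := (hN i).ne'; have := (hN j).ne'
    rw [hR]; simp only [b]; field_simp
  have hrow i (row : I → ℝ) (hne : row ≠ R i) :
      ∑ j, sgnsTerm (Nij i j) (b i j) (row j) < ∑ j, sgnsTerm (Nij i j) (b i j) (R i j) := by
    refine sum_lt_sum_of_ne_of_strictMax (fun j x hx ↦ ?_) hne
    rw [hR'] at hx ⊢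
    exact sgnsTerm_lt_of_ne (hNij i j) (hb i j) hx
  have hlt {M} (hM : M ≠ R) : ℓ R < ℓ M := by
    rw [hℓ', hℓ', neg_lt_neg_iff]
    exact sum_lt_sum_of_ne_of_strictMax hrow hM
  refine ⟨fun M ↦ ?_, fun M ↦ ⟨fun h ↦ ?_, fun h ↦ h ▸ rfl⟩⟩
  · rcases eq_or_ne M R with rfl | hM
    exacts [le_rfl, (hlt hM).le]
  · by_contra hM
    exact (hlt hM).ne' h
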